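/- arXiv:1106.5635 — 2 statements merged into one kernel-verified Lean document; each statement's English description precedes it below -/
import Mathlib

section
/- Let B ⊂ ℝ^d be a convex body and define r_B(C) = sup{h ≥ 0 : ∃ t, hB + t ⊆ C} for convex C (and −∞ if C is empty). Let C₁, …, C_m be convex bodies in ℝ^d. Then the function (y₁, …, y_m) ↦ r_B((C₁ + y₁) ∩ (C₂ + y₂) ∩ ⋯ ∩ (C_m + y_m)) is a concave function on the set of (y₁, …, y_m) ∈ (ℝ^d)^m where the intersection is nonempty. -/
/-- The inradius of `C` relative to the convex body `B`: the supremum of homothety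
coefficients `h ≥ 0` such that a translate of `hB` fits inside `C`
(real-valued; the sets considered here are nonempty and bounded). -/
noncomputable def relInradius {d : ℕ} (B C : Set (EuclideanSpace ℝ (Fin d))) : ℝ :=
  sSup {h : ℝ | 0 ≤ h ∧ ∃ t : EuclideanSpace ℝ (Fin d), (fun b => h • b + t) '' B ⊆ C}

/-
If `aB + τ₁ ⊆ ⋂ (Cᵢ + y₁ᵢ)` and `bB + τ₂ ⊆ ⋂ (Cᵢ + y₂ᵢ)`, then, combining the images of the same
point of `B` and using convexity of the `Cᵢ`,
`(ta + (1-t)b)B + (tτ₁ + (1-t)τ₂) ⊆ ⋂ (Cᵢ + (ty₁ᵢ + (1-t)y₂ᵢ))`. So the admissible coefficient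
sets satisfy `t S₁ + (1-t) S₂ ⊆ S`, and taking suprema gives the inequality once these sets are
bounded, i.e. when `B` has two points and `m > 0`. Otherwise they are `[0, ∞)`, whose `sSup` is
the junk value `0`, and both sides vanish.
-/

open Set

section Module

variable {E : Type*} [AddCommGroup E] [Module ℝ E]

def relInradiusSet (B C : Set E) : Set ℝ :=
  {h : ℝ | 0 ≤ h ∧ ∃ τ : E, (fun b => h • b + τ) '' B ⊆ C}

lemma zero_mem_relInradiusSet (B : Set E) {C : Set E} (hC : C.Nonempty) :
    (0 : ℝ) ∈ relInradiusSet B C := by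
  obtain ⟨p, hp⟩ := hC
  refine ⟨le_rfl, p, ?_⟩
  rintro _ ⟨b, -, rfl⟩
  simpa using hp

lemma relInradiusSet_eq_Ici_of_subsingleton {B C : Set E} (hB : B.Subsingleton)
    (hC : C.Nonempty) : relInradiusSet B C = Ici 0 := by
  obtain ⟨p, hp⟩ := hC
  refine Subset.antisymm (fun h hh => hh.1) fun h (hh : 0 ≤ h) => ⟨hh, ?_⟩
  rcases hB.eq_empty_or_singleton with rfl | ⟨b, rfl⟩
  · exact ⟨0, by simp⟩
  · exact ⟨p - h • b, by simpa using hp⟩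

lemma relInradiusSet_univ (B : Set E) : relInradiusSet B univ = Ici 0 :=
  Subset.antisymm (fun _ hh => hh.1) fun _ hh => ⟨hh, 0, subset_univ _⟩

lemma combo_mem_relInradiusSet {B K₁ K₂ K : Set E} {t : ℝ} (ht0 : 0 ≤ t) (ht1 : t ≤ 1)
    (hK : ∀ p₁ ∈ K₁, ∀ p₂ ∈ K₂, t • p₁ + (1 - t) • p₂ ∈ K) {a b : ℝ}
    (ha : a ∈ relInradiusSet B K₁) (hb : b ∈ relInradiusSet B K₂) :
    t * a + (1 - t) * b ∈ relInradiusSet B K := by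
  obtain ⟨ha0, τ₁, hτ₁⟩ := ha
  obtain ⟨hb0, τ₂, hτ₂⟩ := hb
  refine ⟨by have := sub_nonneg.2 ht1; positivity, t • τ₁ + (1 - t) • τ₂, ?_⟩
  rintro _ ⟨x, hx, rfl⟩
  convert hK _ (hτ₁ (mem_image_of_mem _ hx)) _ (hτ₂ (mem_image_of_mem _ hx)) using 1
  module

lemma combo_mem_iInter_translates {ι : Type*} {C : ι → Set E} (hC : ∀ i, Convex ℝ (C i))
    {y₁ y₂ : ι → E} {t : ℝ} (ht0 : 0 ≤ t) (ht1 : t ≤ 1) {p₁ p₂ : E}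
    (hp₁ : p₁ ∈ ⋂ i, (fun c => c + y₁ i) '' C i) (hp₂ : p₂ ∈ ⋂ i, (fun c => c + y₂ i) '' C i) :
    t • p₁ + (1 - t) • p₂ ∈ ⋂ i, (fun c => c + (t • y₁ i + (1 - t) • y₂ i)) '' C i := by
  refine mem_iInter.2 fun i => ?_
  obtain ⟨c₁, hc₁, rfl⟩ := mem_iInter.1 hp₁ i
  obtain ⟨c₂, hc₂, rfl⟩ := mem_iInter.1 hp₂ i
  refine ⟨t • c₁ + (1 - t) • c₂, hC i hc₁ hc₂ ht0 (sub_nonneg.2 ht1) (by ring), ?_⟩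
  module

end Module

section Normed

variable {E : Type*} [NormedAddCommGroup E]

lemma isBounded_iInter_translates {ι : Type*} {C : ι → Set E} {i₀ : ι}
    (hC : Bornology.IsBounded (C i₀)) (y : ι → E) :
    Bornology.IsBounded (⋂ i, (fun c => c + y i) '' C i) := by
  refine Bornology.IsBounded.subset ?_ (iInter_subset _ i₀)
  simpa only [← add_singleton] using hC.add Bornology.isBounded_singleton

lemma bddAbove_relInradiusSet [NormedSpace ℝ E] {B C : Set E} (hB : B.Nontrivial)
    (hC : Bornology.IsBounded C) : BddAbove (relInradiusSet B C) := by
  obtain ⟨x, hx, x', hx', hxx'⟩ := hB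
  refine ⟨Metric.diam C / dist x x', fun h ⟨h0, τ, hτ⟩ => ?_⟩
  rw [le_div_iff₀ (dist_pos.2 hxx')]
  calc h * dist x x' = dist (h • x + τ) (h • x' + τ) := by
        rw [dist_add_right, dist_smul₀, Real.norm_of_nonneg h0]
    _ ≤ Metric.diam C :=
        Metric.dist_le_diam_of_mem hC (hτ (mem_image_of_mem _ hx)) (hτ (mem_image_of_mem _ hx'))

end Normed

lemma mul_sSup_add_mul_sSup_le {S₁ S₂ S : Set ℝ} {t : ℝ} (ht0 : 0 ≤ t) (ht1 : t ≤ 1)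
    (hS₁ : S₁.Nonempty) (hS₁' : BddAbove S₁) (hS₂ : S₂.Nonempty) (hS₂' : BddAbove S₂)
    (hS : BddAbove S) (hsub : ∀ a ∈ S₁, ∀ b ∈ S₂, t * a + (1 - t) * b ∈ S) :
    t * sSup S₁ + (1 - t) * sSup S₂ ≤ sSup S := by
  have ht1' : 0 ≤ 1 - t := sub_nonneg.2 ht1
  rw [← smul_eq_mul, ← smul_eq_mul, ← Real.sSup_smul_of_nonneg ht0,
    ← Real.sSup_smul_of_nonneg ht1', ← csSup_add hS₁.smul_set (hS₁'.smul_of_nonneg ht0)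
    hS₂.smul_set (hS₂'.smul_of_nonneg ht1')]
  refine csSup_le_csSup hS (hS₁.smul_set.add hS₂.smul_set) ?_
  rintro _ ⟨_, ⟨a, ha, rfl⟩, _, ⟨b, hb, rfl⟩, rfl⟩
  exact hsub a ha b hb

section relInradius

variable {d : ℕ} {B : Set (EuclideanSpace ℝ (Fin d))}

lemma relInradius_eq_sSup (C : Set (EuclideanSpace ℝ (Fin d))) :
    relInradius B C = sSup (relInradiusSet B C) :=
  rfl

lemma relInradius_univ : relInradius B univ = 0 := by
  rw [relInradius_eq_sSup, relInradiusSet_univ, Real.sSup_of_not_bddAbove (not_bddAbove_Ici 0)]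

lemma relInradius_eq_zero_of_subsingleton (hB : B.Subsingleton)
    {C : Set (EuclideanSpace ℝ (Fin d))} (hC : C.Nonempty) : relInradius B C = 0 := by
  rw [relInradius_eq_sSup, relInradiusSet_eq_Ici_of_subsingleton hB hC,
    Real.sSup_of_not_bddAbove (not_bddAbove_Ici 0)]

end relInradius

theorem relInradius_inter_translates_concave_general (d m : ℕ)
    (B : Set (EuclideanSpace ℝ (Fin d)))
    (C : Fin m → Set (EuclideanSpace ℝ (Fin d)))
    (hCconv : ∀ i, Convex ℝ (C i)) (hCcomp : ∀ i, IsCompact (C i))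
    (y₁ y₂ : Fin m → EuclideanSpace ℝ (Fin d)) (t : ℝ) (ht0 : 0 ≤ t) (ht1 : t ≤ 1)
    (h₁ : (⋂ i, (fun c => c + y₁ i) '' C i).Nonempty)
    (h₂ : (⋂ i, (fun c => c + y₂ i) '' C i).Nonempty) :
    t * relInradius B (⋂ i, (fun c => c + y₁ i) '' C i)
      + (1 - t) * relInradius B (⋂ i, (fun c => c + y₂ i) '' C i)
    ≤ relInradius B (⋂ i, (fun c => c + (t • y₁ i + (1 - t) • y₂ i)) '' C i) := by
  rcases isEmpty_or_nonempty (Fin m) with hm | ⟨⟨i₀⟩⟩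
  · simp only [iInter_of_empty, relInradius_univ, mul_zero, add_zero, le_refl]
  rcases B.subsingleton_or_nontrivial with hB | hB
  · obtain ⟨p₁, hp₁⟩ := h₁
    obtain ⟨p₂, hp₂⟩ := h₂
    have hp := combo_mem_iInter_translates hCconv ht0 ht1 hp₁ hp₂
    simp only [relInradius_eq_zero_of_subsingleton hB ⟨_, hp₁⟩,
      relInradius_eq_zero_of_subsingleton hB ⟨_, hp₂⟩,
      relInradius_eq_zero_of_subsingleton hB ⟨_, hp⟩, mul_zero, add_zero, le_refl]
  have hbdd := fun y => bddAbove_relInradiusSet hB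
    (isBounded_iInter_translates (hCcomp i₀).isBounded y)
  exact mul_sSup_add_mul_sSup_le ht0 ht1 ⟨0, zero_mem_relInradiusSet B h₁⟩ (hbdd y₁)
    ⟨0, zero_mem_relInradiusSet B h₂⟩ (hbdd y₂) (hbdd _) fun a ha b hb =>
      combo_mem_relInradiusSet ht0 ht1
        (fun _ hp₁ _ hp₂ => combo_mem_iInter_translates hCconv ht0 ht1 hp₁ hp₂) ha hb

theorem relInradius_inter_translates_concave (d m : ℕ)
    (B : Set (EuclideanSpace ℝ (Fin d)))
    (hBconv : Convex ℝ B) (hBcomp : IsCompact B) (hBint : (interior B).Nonempty)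
    (C : Fin m → Set (EuclideanSpace ℝ (Fin d)))
    (hCconv : ∀ i, Convex ℝ (C i)) (hCcomp : ∀ i, IsCompact (C i))
    (hCint : ∀ i, (interior (C i)).Nonempty)
    (y₁ y₂ : Fin m → EuclideanSpace ℝ (Fin d)) (t : ℝ) (ht0 : 0 ≤ t) (ht1 : t ≤ 1)
    (h₁ : (⋂ i, (fun c => c + y₁ i) '' C i).Nonempty)
    (h₂ : (⋂ i, (fun c => c + y₂ i) '' C i).Nonempty) :
    t * relInradius B (⋂ i, (fun c => c + y₁ i) '' C i)
      + (1 - t) * relInradius B (⋂ i, (fun c => c + y₂ i) '' C i)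
    ≤ relInradius B (⋂ i, (fun c => c + (t • y₁ i + (1 - t) • y₂ i)) '' C i) :=
  relInradius_inter_translates_concave_general d m B C hCconv hCcomp y₁ y₂ t ht0 ht1 h₁ h₂
end

section
/- Let B ⊂ ℝ^d be a convex body, and let C₁ = {x ∈ B : λ(x) ≤ 0} and C₂ = {x ∈ B : λ(x) ≥ 0} be the two pieces of B cut by a hyperplane {λ = 0}, where λ is a nonconstant affine function. Then r_B(C₁) + r_B(C₂) ≥ 1, where r_B(C) = sup{h ≥ 0 : ∃ t, hB + t ⊆ C}. -/
/-!
Let `λ` attain its minimum `λ(a)` and maximum `λ(b)` on `B`. The homothety of ratio `h ∈ [0, 1]`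
centred at `a` maps `B` into `B` and `λ` into `[λ(a), hλ(b) + (1 - h)λ(a)]`; centred at `b`, ratio
`1 - h`, into `[hλ(b) + (1 - h)λ(a), λ(b)]`. Choosing `h` where this convex combination vanishes
puts the two copies in the two pieces, with ratios summing to `1` (if `λ` has constant sign on `B`,
one piece is `B` itself). Both suprema are finite: as `B` has interior points and `λ` is not
constant, `λ(a) < λ(b)`, and a homothet of `B` inside `B` scales this width, so its ratio is at most
`1`.
-/

open Set

section Affine

variable {E : Type*} [AddCommGroup E] [Module ℝ E]

lemma AffineMap.apply_smul_add_sub_apply_smul_add (f : E →ᵃ[ℝ] ℝ) (h : ℝ) (t x y : E) :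
    f (h • x + t) - f (h • y + t) = h * (f x - f y) := by
  rw [← vsub_eq_sub, ← f.linearMap_vsub, ← vsub_eq_sub, ← f.linearMap_vsub, vsub_eq_sub,
    vsub_eq_sub, add_sub_add_right_eq_sub, ← smul_sub, map_smul, smul_eq_mul]

lemma le_one_of_image_smul_add_subset {B : Set E} {f : E →ᵃ[ℝ] ℝ} {a b : E} (ha : a ∈ B)
    (hb : b ∈ B) (hmin : IsMinOn f B a) (hmax : IsMaxOn f B b) (hab : f a < f b) {h : ℝ}
    {t : E} (hsub : (fun x => h • x + t) '' B ⊆ B) : h ≤ 1 := by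
  have hbt : f (h • b + t) ≤ f b := hmax (hsub (mem_image_of_mem _ hb))
  have hat : f a ≤ f (h • a + t) := hmin (hsub (mem_image_of_mem _ ha))
  have hwidth := f.apply_smul_add_sub_apply_smul_add h t b a
  exact (mul_le_iff_le_one_left (sub_pos.2 hab)).1 (by linarith)

lemma Convex.image_smul_add_subset_sublevel {B : Set E} (hB : Convex ℝ B) {f : E →ᵃ[ℝ] ℝ}
    {a b : E} (ha : a ∈ B) (hmax : IsMaxOn f B b) {h : ℝ} (h0 : 0 ≤ h) (h1 : h ≤ 1)
    (hh : h * f b + (1 - h) * f a ≤ 0) :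
    (fun x => h • x + (1 - h) • a) '' B ⊆ {x ∈ B | f x ≤ 0} := by
  rintro _ ⟨x, hx, rfl⟩
  refine ⟨hB hx ha h0 (sub_nonneg.2 h1) (add_sub_cancel h 1), ?_⟩
  rw [Convex.combo_affine_apply (add_sub_cancel h 1), smul_eq_mul, smul_eq_mul]
  nlinarith [mul_le_mul_of_nonneg_left (hmax hx : f x ≤ f b) h0]

end Affine

lemma IsMinOn.lt_of_isMaxOn_of_nontrivial {α β : Type*} [LinearOrder β] {f : α → β} {s : Set α}
    {a b : α} (hmin : IsMinOn f s a) (hmax : IsMaxOn f s b) (hs : (f '' s).Nontrivial) :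
    f a < f b := by
  obtain ⟨_, ⟨x, hx, rfl⟩, _, ⟨y, hy, rfl⟩, hxy⟩ := hs
  rcases hxy.lt_or_gt with hlt | hlt
  · exact (hmin hx).trans_lt (hlt.trans_le (hmax hy))
  · exact (hmin hy).trans_lt (hlt.trans_le (hmax hx))

lemma AffineMap.nontrivial_image_of_linear_ne_zero {E : Type*} [NormedAddCommGroup E]
    [NormedSpace ℝ E] [FiniteDimensional ℝ E] (f : E →ᵃ[ℝ] ℝ) (hf : f.linear ≠ 0) {s : Set E}
    (hs : (interior s).Nonempty) : (f '' s).Nontrivial := by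
  have hopen : IsOpenMap f := AffineMap.isOpenMap_linear_iff.1
    (f.linear.isOpenMap_of_finiteDimensional (LinearMap.surjective_of_ne_zero hf))
  obtain ⟨x, hx⟩ := hs
  have hnhds : f '' interior s ∈ nhds (f x) :=
    (hopen _ isOpen_interior).mem_nhds (mem_image_of_mem f hx)
  exact (infinite_of_mem_nhds (f x) hnhds).nontrivial.mono (image_mono interior_subset)

section RelInradius

variable {d : ℕ} {B : Set (EuclideanSpace ℝ (Fin d))}

lemma relInradius_nonneg (B C : Set (EuclideanSpace ℝ (Fin d))) : 0 ≤ relInradius B C :=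
  Real.sSup_nonneg fun _ hh => hh.1

lemma le_relInradius_of_image_subset {C : Set (EuclideanSpace ℝ (Fin d))} (hCB : C ⊆ B)
    (hB : ∀ (h : ℝ) t, (fun x => h • x + t) '' B ⊆ B → h ≤ 1) {h : ℝ}
    {t : EuclideanSpace ℝ (Fin d)} (h0 : 0 ≤ h) (hsub : (fun x => h • x + t) '' B ⊆ C) :
    h ≤ relInradius B C :=
  le_csSup ⟨1, fun _ ⟨_, _, ht⟩ => hB _ _ (ht.trans hCB)⟩ ⟨h0, t, hsub⟩

lemma le_relInradius_sublevel (hBc : Convex ℝ B)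
    (hB : ∀ (h : ℝ) t, (fun x => h • x + t) '' B ⊆ B → h ≤ 1)
    {f : EuclideanSpace ℝ (Fin d) →ᵃ[ℝ] ℝ} {a b : EuclideanSpace ℝ (Fin d)} (ha : a ∈ B)
    (hmax : IsMaxOn f B b) {h : ℝ} (h0 : 0 ≤ h) (h1 : h ≤ 1)
    (hh : h * f b + (1 - h) * f a ≤ 0) :
    h ≤ relInradius B {x ∈ B | f x ≤ 0} :=
  le_relInradius_of_image_subset (sep_subset _ _) hB h0
    (hBc.image_smul_add_subset_sublevel ha hmax h0 h1 hh)

lemma le_relInradius_superlevel (hBc : Convex ℝ B)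
    (hB : ∀ (h : ℝ) t, (fun x => h • x + t) '' B ⊆ B → h ≤ 1)
    {f : EuclideanSpace ℝ (Fin d) →ᵃ[ℝ] ℝ} {a b : EuclideanSpace ℝ (Fin d)} (hmin : IsMinOn f B a)
    (hb : b ∈ B) {h : ℝ} (h0 : 0 ≤ h) (h1 : h ≤ 1) (hh : 0 ≤ h * f a + (1 - h) * f b) :
    h ≤ relInradius B {x ∈ B | 0 ≤ f x} := by
  have hmax : IsMaxOn (-f) B a := fun x hx => show -f x ≤ -f a from neg_le_neg (hmin hx)
  have hh' : h * (-f) a + (1 - h) * (-f) b ≤ 0 := by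
    simp only [AffineMap.coe_neg, Pi.neg_apply]; linarith
  simpa using le_relInradius_sublevel hBc hB hb hmax h0 h1 hh'

end RelInradius

theorem hyperplane_cut_inradius_sum (d : ℕ)
    (B : Set (EuclideanSpace ℝ (Fin d)))
    (hBconv : Convex ℝ B) (hBcomp : IsCompact B) (hBint : (interior B).Nonempty)
    (lam : EuclideanSpace ℝ (Fin d) →ᵃ[ℝ] ℝ) (hlam : lam.linear ≠ 0) :
    1 ≤ relInradius B {x ∈ B | lam x ≤ 0} + relInradius B {x ∈ B | 0 ≤ lam x} := by
  have hBne : B.Nonempty := hBint.mono interior_subset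
  have hcont : ContinuousOn lam B := lam.continuous_of_finiteDimensional.continuousOn
  obtain ⟨a, ha, hmin⟩ := hBcomp.exists_isMinOn hBne hcont
  obtain ⟨b, hb, hmax⟩ := hBcomp.exists_isMaxOn hBne hcont
  have hab : lam a < lam b :=
    hmin.lt_of_isMaxOn_of_nontrivial hmax (lam.nontrivial_image_of_linear_ne_zero hlam hBint)
  have hB : ∀ (h : ℝ) t, (fun x => h • x + t) '' B ⊆ B → h ≤ 1 :=
    fun _ _ => le_one_of_image_smul_add_subset ha hb hmin hmax hab
  have r₁ := relInradius_nonneg B {x ∈ B | lam x ≤ 0}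
  have r₂ := relInradius_nonneg B {x ∈ B | 0 ≤ lam x}
  rcases le_or_gt (lam b) 0 with hb0 | hb0
  · linarith [le_relInradius_sublevel hBconv hB ha hmax zero_le_one le_rfl (by simpa using hb0)]
  rcases le_or_gt 0 (lam a) with ha0 | ha0
  · linarith [le_relInradius_superlevel hBconv hB hmin hb zero_le_one le_rfl (by simpa using ha0)]
  set h := -lam a / (lam b - lam a)
  have hcross : h * lam b + (1 - h) * lam a = 0 := by
    simp only [h]; field_simp [(sub_pos.2 hab).ne']; ring
  have h0 : 0 ≤ h := div_nonneg (by linarith) (by linarith)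
  have h1 : h ≤ 1 := (div_le_one (by linarith)).2 (by linarith)
  linarith [le_relInradius_sublevel hBconv hB ha hmax h0 h1 hcross.le,
    le_relInradius_superlevel hBconv hB hmin hb (sub_nonneg.2 h1) (sub_le_self 1 h0)
      (by rw [sub_sub_cancel]; linarith)]
end
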